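/- arXiv:1007.4236 — 3 statements merged into one kernel-verified Lean document; each statement's English description precedes it below -/
import Mathlib

section
/- Let φ be the metric-path cost function with nonnegative weights w_1, …, w_{n−1}, i.e., φ(i,j) = Σ_{t=min(i,j)}^{max(i,j)−1} w_t for i ≠ j. Then for every permutation π ∈ S_n: M_φ(π) = L_φ(π) = (1/2) Σ_{i=1}^{n} φ(i, π(i)) (where φ(i,i) := 0). -/
variable {n : ℕ}

/-- The minimum `φ`-cost over all transposition decompositions of `π`. -/
noncomputable def Mcost (φ : Fin n → Fin n → ℝ) (π : Equiv.Perm (Fin n)) : ℝ :=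
  sInf {c : ℝ | ∃ l : List (Fin n × Fin n), (∀ p ∈ l, p.1 ≠ p.2) ∧
    (l.map fun p => Equiv.swap p.1 p.2).prod = π ∧
    (l.map fun p => φ p.1 p.2).sum = c}

/-- The minimum `ψ`-cost over all transposition decompositions of `π` consisting of
exactly `m` transpositions. -/
noncomputable def Lcost (ψ : Fin n → Fin n → ℝ) (m : ℕ) (π : Equiv.Perm (Fin n)) : ℝ :=
  sInf {c : ℝ | ∃ l : List (Fin n × Fin n), (∀ p ∈ l, p.1 ≠ p.2) ∧ l.length = m ∧
    (l.map fun p => Equiv.swap p.1 p.2).prod = π ∧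
    (l.map fun p => ψ p.1 p.2).sum = c}

/-- `c(π)`: the number of cycles of `π` acting on `Fin n`, fixed points counted as
cycles of length one (= number of nontrivial cycles + number of fixed points). -/
noncomputable def cNum (π : Equiv.Perm (Fin n)) : ℕ :=
  π.cycleFactorsFinset.card + (n - π.support.card)

/-!
Write `φ i j = |F j - F i|`, where `F` is the monotone sequence of prefix sums of `w`. The
displacement `D σ = ∑ i, φ i (σ i)` is subadditive and `D (swap a b) = 2 φ a b`, so every
transposition decomposition of `π` costs at least `D π / 2`. Conversely, if `π ≠ 1` there are
`x < y` on one cycle with `π y ≤ x` and `y ≤ π x` (take `π x` to be the largest moved point);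
then `π * swap x y` splits that cycle in two and has displacement `D π - 2 φ x y`, so induction
gives a decomposition into `n - c(π)` transpositions of cost exactly `D π / 2`. Cycles are
counted through their least elements.
-/

open Equiv Equiv.Perm Finset

section Displacement

variable {α E : Type*} [Fintype α] [PseudoMetricSpace E] (f : α → E)

noncomputable def displacement (σ : Perm α) : ℝ :=
  ∑ i, dist (f i) (f (σ i))

@[simp]
lemma displacement_one : displacement f 1 = 0 := by
  simp [displacement]

lemma displacement_mul_le (σ τ : Perm α) :
    displacement f (τ * σ) ≤ displacement f σ + displacement f τ :=
  calc ∑ i, dist (f i) (f (τ (σ i)))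
      ≤ ∑ i, (dist (f i) (f (σ i)) + dist (f (σ i)) (f (τ (σ i)))) :=
        sum_le_sum fun i _ => dist_triangle _ _ _
    _ = displacement f σ + displacement f τ := by
        rw [sum_add_distrib, Equiv.sum_comp σ fun j => dist (f j) (f (τ j))]
        rfl

variable [DecidableEq α]

lemma displacement_swap (a b : α) : displacement f (swap a b) = 2 * dist (f a) (f b) := by
  rcases eq_or_ne a b with rfl | hab
  · rw [swap_self, dist_self, mul_zero]
    exact displacement_one f
  · rw [displacement, Fintype.sum_eq_add a b hab fun i hi => by
      rw [swap_apply_of_ne_of_ne hi.1 hi.2, dist_self]]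
    rw [swap_apply_left, swap_apply_right, dist_comm (f b)]
    ring

lemma displacement_prod_swaps_le (l : List (α × α)) :
    displacement f (l.map fun p => swap p.1 p.2).prod ≤
      2 * (l.map fun p => dist (f p.1) (f p.2)).sum := by
  induction l with
  | nil => simp
  | cons p l ih =>
    simp only [List.map_cons, List.prod_cons, List.sum_cons]
    linarith [displacement_mul_le f (l.map fun p => swap p.1 p.2).prod (swap p.1 p.2),
      displacement_swap f p.1 p.2]

end Displacement

namespace Equiv.Perm

section SameCycle

variable {α : Type*} {f : Perm α} {x y z w : α}

lemma SameCycle.mem_of_mapsTo [Finite α] {s : Set α} (hs : Set.MapsTo f s s)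
    (h : f.SameCycle x y) (hx : x ∈ s) : y ∈ s := by
  obtain ⟨k, -, rfl⟩ := h.exists_pow_eq'
  rw [coe_pow]
  exact hs.iterate k hx

variable [DecidableEq α]

lemma sameCycle_mul_swap_iff_of_not_sameCycle [Finite α] (hx : ¬f.SameCycle x z)
    (hy : ¬f.SameCycle y z) : (f * swap x y).SameCycle z w ↔ f.SameCycle z w := by
  have hpow : ∀ k : ℕ, ((f * swap x y) ^ k) z = (f ^ k) z := by
    intro k
    induction k with
    | zero => rfl
    | succ k ih =>
      have hkx : (f ^ k) z ≠ x := fun h => hx ⟨-k, by simp [← h]⟩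
      have hky : (f ^ k) z ≠ y := fun h => hy ⟨-k, by simp [← h]⟩
      rw [pow_succ', mul_apply, ih, pow_succ', mul_apply, mul_apply,
        swap_apply_of_ne_of_ne hkx hky]
  constructor <;> intro h <;> obtain ⟨k, -, rfl⟩ := h.exists_pow_eq' <;>
    exact ⟨k, by simp [hpow]⟩

lemma SameCycle.mul_swap_or [Finite α] (h : f.SameCycle x z) :
    (f * swap x y).SameCycle x z ∨ (f * swap x y).SameCycle y z := by
  set g := f * swap x y
  have hf : f = g * swap x y := by simp [g, mul_assoc]
  refine h.mem_of_mapsTo (s := {w | g.SameCycle x w ∨ g.SameCycle y w}) ?_ (Or.inl rfl)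
  intro w hw
  rw [hf, mul_apply]
  by_cases hwx : w = x
  · rw [hwx, swap_apply_left]
    exact Or.inr (sameCycle_apply_right.2 (SameCycle.refl _ _))
  by_cases hwy : w = y
  · rw [hwy, swap_apply_right]
    exact Or.inl (sameCycle_apply_right.2 (SameCycle.refl _ _))
  rw [swap_apply_of_ne_of_ne hwx hwy]
  exact hw.imp sameCycle_apply_right.2 sameCycle_apply_right.2

lemma sameCycle_iff_mul_swap_sameCycle_or [Finite α] (h : f.SameCycle x y) :
    f.SameCycle x z ↔ (f * swap x y).SameCycle x z ∨ (f * swap x y).SameCycle y z := by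
  refine ⟨SameCycle.mul_swap_or, ?_⟩
  rintro (hz | hz)
  · have := hz.mul_swap_or (y := y)
    rw [mul_swap_mul_self] at this
    exact this.elim id h.trans
  · have := hz.mul_swap_or (y := x)
    rw [swap_comm y x, mul_swap_mul_self] at this
    exact this.elim h.trans id

lemma not_sameCycle_mul_swap [Finite α] (hxy : x ≠ y) (h : f.SameCycle x y) :
    ¬(f * swap x y).SameCycle x y := by
  have hex : ∃ k, (f ^ k) x = y := let ⟨k, _, hk⟩ := h.exists_pow_eq'; ⟨k, hk⟩
  set k := Nat.find hex
  have hk : (f ^ k) x = y := Nat.find_spec hex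
  have hmin : ∀ j < k, (f ^ j) x ≠ y := fun j hj => Nat.find_min hex hj
  have hk0 : 0 < k := Nat.pos_of_ne_zero fun h0 => hxy (by rw [← hk, h0, pow_zero, one_apply])
  -- `f * swap x y` permutes the points `f x, f² x, …, f^k x = y`, none of which is `x`
  let B : Set α := {w | ∃ j, 0 < j ∧ j ≤ k ∧ (f ^ j) x = w}
  have hxB : x ∉ B := by
    rintro ⟨j, hj0, hjk, hj⟩
    refine hmin (k - j) (by omega) ?_
    calc (f ^ (k - j)) x = (f ^ (k - j)) ((f ^ j) x) := by rw [hj]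
      _ = y := by rw [← mul_apply, ← pow_add, Nat.sub_add_cancel hjk, hk]
  have hB : Set.MapsTo (f * swap x y) B B := by
    rintro _ ⟨j, hj0, hjk, rfl⟩
    rw [mul_apply]
    rcases hjk.eq_or_lt with rfl | hjk
    · rw [hk, swap_apply_right]
      exact ⟨1, one_pos, hj0, pow_one f ▸ rfl⟩
    · rw [swap_apply_of_ne_of_ne (fun h => hxB ⟨j, hj0, hjk.le, h⟩) (hmin j hjk)]
      exact ⟨j + 1, j.succ_pos, hjk, by rw [pow_succ', mul_apply]⟩
  exact fun hs => hxB (hs.symm.mem_of_mapsTo hB ⟨k, hk0, le_rfl, hk⟩)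

end SameCycle

section CycleMins

variable {α : Type*} [Fintype α] [LinearOrder α] {f : Perm α} {x y : α}

def cycleMins (f : Perm α) : Finset α :=
  {x | ∀ y, f.SameCycle x y → x ≤ y}

lemma mem_cycleMins : x ∈ cycleMins f ↔ ∀ y, f.SameCycle x y → x ≤ y := by
  simp [cycleMins]

lemma card_filter_sameCycle_cycleMins (f : Perm α) (x : α) :
    #{y ∈ cycleMins f | f.SameCycle x y} = 1 := by
  set O : Finset α := {y | f.SameCycle x y}
  have hO : O.Nonempty := ⟨x, by simpa [O] using SameCycle.refl f x⟩
  have hm : f.SameCycle x (O.min' hO) := by simpa [O] using O.min'_mem hO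
  rw [card_eq_one]
  refine ⟨O.min' hO, ?_⟩
  ext z
  simp only [mem_filter, mem_singleton, mem_cycleMins]
  constructor
  · rintro ⟨hz, hxz⟩
    exact le_antisymm (hz _ (hxz.symm.trans hm)) (O.min'_le z (by simpa [O] using hxz))
  · rintro rfl
    exact ⟨fun y hy => O.min'_le y (by simpa [O] using hm.trans hy), hm⟩

lemma card_cycleMins (f : Perm α) :
    #(cycleMins f) = #f.cycleFactorsFinset + (Fintype.card α - #f.support) := by
  rw [← card_filter_add_card_filter_not (s := cycleMins f) (p := (· ∈ f.support))]
  congr 1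
  · refine card_bij (fun a _ => f.cycleOf a) (fun a ha => ?_) (fun a ha b hb hab => ?_)
      (fun c hc => ?_)
    · exact cycleOf_mem_cycleFactorsFinset_iff.2 (mem_filter.1 ha).2
    · simp only [mem_filter, mem_cycleMins] at ha hb
      have hab := (sameCycle_iff_cycleOf_eq_of_mem_support ha.2 hb.2).2 hab
      exact le_antisymm (ha.1 b hab) (hb.1 a hab.symm)
    · obtain ⟨z, hz⟩ := (mem_cycleFactorsFinset_iff.1 hc).1.nonempty_support
      obtain ⟨a, ha⟩ := card_eq_one.1 (card_filter_sameCycle_cycleMins f z)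
      have ha' : a ∈ {y ∈ cycleMins f | f.SameCycle z y} := ha ▸ mem_singleton_self a
      rw [mem_filter] at ha'
      refine ⟨a, mem_filter.2 ⟨ha'.1, ha'.2.mem_support_iff.1 ?_⟩, ?_⟩
      · exact mem_cycleFactorsFinset_support_le hc hz
      · rw [← ha'.2.cycleOf_eq, cycle_is_cycleOf hz hc]
  · rw [← card_compl]
    congr 1
    ext z
    simp only [mem_filter, mem_compl, and_iff_right_iff_imp, mem_cycleMins]
    exact fun hz y hzy => (hzy.eq_of_left (notMem_support.1 hz)).le

lemma card_cycleMins_mul_swap (hxy : x ≠ y) (h : f.SameCycle x y) :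
    #(cycleMins (f * swap x y)) = #(cycleMins f) + 1 := by
  set g := f * swap x y
  have hsplit (σ : Perm α) := (card_filter_add_card_filter_not (s := cycleMins σ)
    (p := f.SameCycle x)).symm
  have hin : {z ∈ cycleMins g | f.SameCycle x z} =
      {z ∈ cycleMins g | g.SameCycle x z} ∪ {z ∈ cycleMins g | g.SameCycle y z} := by
    rw [← filter_or]
    exact filter_congr fun z _ => sameCycle_iff_mul_swap_sameCycle_or h
  have hdisj : _root_.Disjoint {z ∈ cycleMins g | g.SameCycle x z}
      {z ∈ cycleMins g | g.SameCycle y z} :=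
    disjoint_filter.2 fun z _ hx hy => not_sameCycle_mul_swap hxy h (hx.trans hy.symm)
  have hout :
      {z ∈ cycleMins g | ¬f.SameCycle x z} = {z ∈ cycleMins f | ¬f.SameCycle x z} := by
    ext z
    simp only [mem_filter, mem_cycleMins, and_congr_left_iff]
    intro hz
    simp only [g, sameCycle_mul_swap_iff_of_not_sameCycle hz fun h' => hz (h.trans h')]
  rw [hsplit g, hsplit f, hin, card_union_of_disjoint hdisj, hout,
    card_filter_sameCycle_cycleMins, card_filter_sameCycle_cycleMins,
    card_filter_sameCycle_cycleMins]
  ring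

lemma exists_sameCycle_apply_le_lt_le (hf : f ≠ 1) :
    ∃ x y, f.SameCycle x y ∧ f y ≤ x ∧ x < y ∧ y ≤ f x := by
  have hs : f.support.Nonempty := nonempty_of_ne_empty (mt support_eq_empty_iff.1 hf)
  set M := f.support.max' hs
  have hM : M ∈ f.support := max'_mem _ _
  set x := f⁻¹ M
  have hfx : f x = M := f.apply_symm_apply M
  have hxM : x < M := by
    refine (f.support.le_max' x (apply_mem_support.1 (hfx ▸ hM))).lt_of_ne fun h => ?_
    rw [h] at hfx
    exact mem_support.1 hM hfx
  -- otherwise the points of the cycle of `x` below `x` would be closed under `f⁻¹`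
  obtain ⟨y, hxy, hyx, hxy'⟩ : ∃ y, f.SameCycle x y ∧ f y ≤ x ∧ x < y := by
    by_contra! hcon
    let S : Set α := {z | f.SameCycle x z ∧ z ≤ x}
    have hmaps : Set.MapsTo ⇑f⁻¹ S S := by
      rintro z ⟨hz, hzx⟩
      have hz' : f.SameCycle x (f⁻¹ z) := sameCycle_apply_right.1 (by simpa using hz)
      exact ⟨hz', hcon _ hz' (by simpa using hzx)⟩
    have hxfx : f⁻¹.SameCycle x (f x) := sameCycle_inv.2 (sameCycle_apply_right.2 (.refl f x))
    have hfxS : f x ∈ S := hxfx.mem_of_mapsTo hmaps ⟨.refl f x, le_rfl⟩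
    exact absurd (hfx ▸ hfxS.2) (not_le.2 hxM)
  refine ⟨x, y, hxy, hyx, hxy', hfx ▸ f.support.le_max' y (mem_support.2 fun h => ?_)⟩
  rw [h] at hyx
  exact absurd hxy' (not_lt.2 hyx)

end CycleMins

end Equiv.Perm

section PathDisplacement

variable {α : Type*} [Fintype α] [LinearOrder α] {f : α → ℝ}

lemma displacement_mul_swap_add (hf : Monotone f) {π : Perm α} {x y : α} (h1 : π y ≤ x)
    (h2 : x < y) (h3 : y ≤ π x) :
    displacement f (π * swap x y) + 2 * dist (f x) (f y) = displacement f π := by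
  have hdiff : ∑ i, (dist (f i) (f ((π * swap x y) i)) - dist (f i) (f (π i))) =
      -(2 * dist (f x) (f y)) := by
    rw [Fintype.sum_eq_add x y h2.ne fun i hi => by
      rw [mul_apply, swap_apply_of_ne_of_ne hi.1 hi.2, sub_self]]
    simp only [mul_apply, swap_apply_left, swap_apply_right, Real.dist_eq]
    have h1 := hf h1
    have h2 := hf h2.le
    have h3 := hf h3
    rw [abs_of_nonneg (sub_nonneg.2 h1), abs_of_nonpos (sub_nonpos.2 h3),
      abs_of_nonpos (sub_nonpos.2 (h2.trans h3)), abs_of_nonneg (sub_nonneg.2 (h1.trans h2)),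
      abs_of_nonpos (sub_nonpos.2 h2)]
    ring
  rw [sum_sub_distrib] at hdiff
  unfold displacement
  linarith

lemma exists_swap_decomposition (hf : Monotone f) (π : Perm α) :
    ∃ l : List (α × α), (∀ p ∈ l, p.1 ≠ p.2) ∧
      l.length + #π.cycleMins = Fintype.card α ∧
      (l.map fun p => swap p.1 p.2).prod = π ∧
      2 * (l.map fun p => dist (f p.1) (f p.2)).sum = displacement f π := by
  induction hk : Fintype.card α - #π.cycleMins using Nat.strong_induction_on generalizing π with
  | _ k ih =>
    rcases eq_or_ne π 1 with rfl | hπ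
    · refine ⟨[], by simp, ?_, by simp, by simp⟩
      simp [cycleMins, sameCycle_one]
    obtain ⟨x, y, hxy, h1, h2, h3⟩ := exists_sameCycle_apply_le_lt_le hπ
    have hcard := card_cycleMins_mul_swap h2.ne hxy
    have hle := card_le_univ (π * swap x y).cycleMins
    obtain ⟨l, hl, hlen, hprod, hcost⟩ := ih _ (by omega) (π * swap x y) rfl
    refine ⟨l ++ [(x, y)], ?_, ?_, ?_, ?_⟩
    · intro p hp
      rcases List.mem_append.1 hp with hp | hp
      · exact hl p hp
      · rw [List.mem_singleton.1 hp]
        exact h2.ne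
    · simp only [List.length_append, List.length_singleton]
      omega
    · simp [hprod]
    · simp only [List.map_append, List.sum_append, List.map_singleton, List.sum_singleton]
      linarith [displacement_mul_swap_add hf h1 h2 h3]

end PathDisplacement

section PrefixSums

variable {w : ℕ → ℝ}

lemma monotone_sum_range (hw : ∀ t, t + 1 < n → 0 ≤ w t) :
    Monotone fun i : Fin n => ∑ t ∈ range i, w t := fun i j hij =>
  sum_le_sum_of_subset_of_nonneg (range_subset_range.2 hij) fun t ht _ =>
    hw t (by have := mem_range.1 ht; omega)

lemma sum_Ico_min_max_eq_dist (hw : ∀ t, t + 1 < n → 0 ≤ w t) (i j : Fin n) :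
    ∑ t ∈ Ico (min (i : ℕ) j) (max (i : ℕ) j), w t =
      dist (∑ t ∈ range i, w t) (∑ t ∈ range j, w t) := by
  wlog hij : i ≤ j generalizing i j
  · rw [min_comm, max_comm, dist_comm]
    exact this j i (le_of_not_ge hij)
  have hmono := monotone_sum_range hw hij
  rw [min_eq_left (Fin.le_def.1 hij), max_eq_right (Fin.le_def.1 hij), sum_Ico_eq_sub _ hij,
    Real.dist_eq, abs_sub_comm, abs_of_nonneg (sub_nonneg.2 hmono)]

end PrefixSums

lemma cNum_eq_card_cycleMins (π : Perm (Fin n)) : cNum π = #π.cycleMins := by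
  rw [card_cycleMins, Fintype.card_fin, cNum]

/-- let `φ` be the metric-path cost with nonnegative weights `w t` on the
edges `(t, t+1)` of the defining path, i.e. `φ i j = Σ_{t = min i j}^{max i j − 1} w t`
(so in particular `φ i i = 0`).  Then for every permutation `π`,
`M_φ(π) = L_φ(π) = (1/2) Σ_i φ(i, π i)`. -/
theorem stmt16 (w : ℕ → ℝ) (hw : ∀ t, t + 1 < n → 0 ≤ w t)
    (φ : Fin n → Fin n → ℝ)
    (hφ : ∀ i j : Fin n,
      φ i j = ∑ t ∈ Finset.Ico (min (i : ℕ) (j : ℕ)) (max (i : ℕ) (j : ℕ)), w t)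
    (π : Equiv.Perm (Fin n)) :
    Mcost φ π = Lcost φ (n - cNum π) π ∧
    Lcost φ (n - cNum π) π = (1 / 2 : ℝ) * ∑ i : Fin n, φ i (π i) := by
  set F : Fin n → ℝ := fun i => ∑ t ∈ range i, w t
  obtain rfl : φ = fun i j => dist (F i) (F j) :=
    funext₂ fun i j => (hφ i j).trans (sum_Ico_min_max_eq_dist hw i j)
  obtain ⟨l, hl, hlen, hprod, hcost⟩ :=
    exists_swap_decomposition (f := F) (monotone_sum_range hw) π
  rw [Fintype.card_fin, ← cNum_eq_card_cycleMins] at hlen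
  have hlow : ∀ l' : List (Fin n × Fin n), (l'.map fun p => swap p.1 p.2).prod = π →
      (1 / 2 : ℝ) * displacement F π ≤ (l'.map fun p => dist (F p.1) (F p.2)).sum := by
    intro l' hl'
    linarith [hl' ▸ displacement_prod_swaps_le F l']
  have hL :
      Lcost (fun i j => dist (F i) (F j)) (n - cNum π) π = (1 / 2 : ℝ) * displacement F π :=
    IsLeast.csInf_eq ⟨⟨l, hl, by omega, hprod, by linarith⟩, by
      rintro c ⟨l', -, -, hl', rfl⟩
      exact hlow l' hl'⟩
  have hM : Mcost (fun i j => dist (F i) (F j)) π = (1 / 2 : ℝ) * displacement F π :=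
    IsLeast.csInf_eq ⟨⟨l, hl, hprod, by linarith⟩, by
      rintro c ⟨l', -, hl', rfl⟩
      exact hlow l' hl'⟩
  exact ⟨hM.trans hL.symm, hL⟩
end

section
/- Let w_1, …, w_{n−1} be nonnegative reals, and define φ*(i,j) := 2 Σ_{t=min(i,j)}^{max(i,j)−1} w_t − max_{min(i,j) ≤ t ≤ max(i,j)−1} w_t for i ≠ j, and φ*(i,i) := 0. For π ∈ S_n, let M_e(π) denote the minimum, over all decompositions of π into adjacent transpositions swap(t, t+1), of the total weight (the sum of w_t over the adjacent transpositions used, with multiplicity), and let L(π) denote the minimum φ*-cost over all transposition decompositions of π consisting of exactly n − c(π) transpositions. Then L(π) ≤ 2·M_e(π). -/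
variable {n : ℕ}

/-- The optimized cost associated with nonnegative weights `w t` on the edges
`(t, t+1)` of the path `0 — 1 — ⋯ — (n−1)`:
`φ*(i,j) = 2 Σ_{t = min i j}^{max i j − 1} w t − max_{min i j ≤ t ≤ max i j − 1} w t`
for `i ≠ j`, and `φ*(i,i) = 0`. -/
noncomputable def phiStar (w : ℕ → ℝ) (i j : Fin n) : ℝ :=
  if i = j then 0
  else 2 * (∑ t ∈ Finset.Ico (min (i : ℕ) (j : ℕ)) (max (i : ℕ) (j : ℕ)), w t)
    - sSup (w '' Set.Ico (min (i : ℕ) (j : ℕ)) (max (i : ℕ) (j : ℕ)))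

open Fin.NatCast in
/-- `M_e(π)`: the minimum total weight (with multiplicity) over all decompositions of
`π` into adjacent transpositions `swap t (t+1)`. -/
noncomputable def Me [NeZero n] (w : ℕ → ℝ) (π : Equiv.Perm (Fin n)) : ℝ :=
  sInf {c : ℝ | ∃ l : List ℕ, (∀ t ∈ l, t + 1 < n) ∧
    (l.map fun t => Equiv.swap (t : Fin n) ((t + 1 : ℕ) : Fin n)).prod = π ∧
    (l.map w).sum = c}

/-!
Put vertex `i` of the path at `x i = w 0 + ⋯ + w (i - 1)` on the real line and measure a
permutation by its displacement `D π = ∑ i, |x (π i) - x i|`. By the triangle inequality an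
adjacent transposition `swap t (t + 1)` changes `D` by at most `2 * w t`, so `D π ≤ 2 * M_e(π)`.
Conversely `φ*(i, j) ≤ 2 * |x j - x i|`, and each cycle `σ` is a product of `#support - 1`
transpositions whose costs `2 * |x b - x a|` add up to at most `D σ`: for the point `a` of the
cycle with largest `x a`, after possibly inverting `σ`, `x (σ a)` lies between `x (σ⁻¹ a)` and
`x a`, so splicing `a` out of the cycle with `swap a (σ a)` lowers `D` by exactly
`2 * |x (σ a) - x a|`.
-/

open Finset Equiv

namespace Equiv.Perm

variable {α : Type*} [Fintype α] (x : α → ℝ)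

def displacement (σ : Perm α) : ℝ := ∑ i, |x (σ i) - x i|

@[simp]
lemma displacement_one : (1 : Perm α).displacement x = 0 := by
  simp [displacement]

lemma displacement_inv (σ : Perm α) : σ⁻¹.displacement x = σ.displacement x := by
  rw [displacement, ← Equiv.sum_comp σ]
  simp [displacement, abs_sub_comm]

lemma displacement_mul_le (σ τ : Perm α) :
    (σ * τ).displacement x ≤ σ.displacement x + τ.displacement x := by
  rw [displacement, displacement, displacement, ← Equiv.sum_comp τ (fun j => |x (σ j) - x j|),
    ← sum_add_distrib]
  exact sum_le_sum fun i _ => abs_sub_le _ _ _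

lemma displacement_mul_of_disjoint {σ τ : Perm α} (h : σ.Disjoint τ) :
    (σ * τ).displacement x = σ.displacement x + τ.displacement x := by
  rw [displacement, displacement, displacement, ← sum_add_distrib]
  refine sum_congr rfl fun i _ => ?_
  rcases h i with hσ | hτ
  · rw [h.commute.eq, mul_apply, hσ]
    simp
  · simp [hτ]

variable [DecidableEq α]

lemma displacement_swap (a b : α) : (swap a b).displacement x = 2 * |x b - x a| := by
  rcases eq_or_ne a b with rfl | hab
  · simp [← one_def]
  rw [displacement,
    Fintype.sum_eq_add a b hab fun i hi => by simp [swap_apply_of_ne_of_ne hi.1 hi.2]]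
  simp [abs_sub_comm]
  ring

/-- `swap a (σ a) * σ` splices `a` out of its cycle: the legs `σ⁻¹ a → a → σ a` become the single
leg `σ⁻¹ a → σ a`. -/
lemma displacement_swap_mul_add {σ : Perm α} {a : α} (h₁ : x (σ⁻¹ a) ≤ x (σ a))
    (h₂ : x (σ a) ≤ x a) :
    (swap a (σ a) * σ).displacement x + 2 * |x (σ a) - x a| = σ.displacement x := by
  rcases eq_or_ne (σ a) a with hfix | hmove
  · simp [hfix, ← one_def]
  set u := σ⁻¹ a
  have hu : σ u = a := σ.apply_symm_apply a
  have hua : u ≠ a := fun h => hmove (h ▸ hu)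
  rw [← eq_sub_iff_add_eq', displacement, displacement, ← sum_sub_distrib,
    Fintype.sum_eq_add u a hua fun i hi => ?_]
  · simp only [mul_apply, hu, swap_apply_left, swap_apply_right, sub_self, abs_zero]
    rw [abs_of_nonneg (sub_nonneg.2 (h₁.trans h₂)), abs_of_nonneg (sub_nonneg.2 h₁),
      abs_of_nonpos (sub_nonpos.2 h₂)]
    ring
  · have h₁ : σ i ≠ a := fun h => hi.1 (σ.injective (h.trans hu.symm))
    have h₂ : σ i ≠ σ a := σ.injective.ne hi.2
    simp [swap_apply_of_ne_of_ne h₁ h₂]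


def HasCheapSwapDecomp (σ : Perm α) (m : ℕ) : Prop :=
  ∃ l : List (α × α), (∀ p ∈ l, p.1 ≠ p.2) ∧ l.length = m ∧
    (l.map fun p => swap p.1 p.2).prod = σ ∧
    (l.map fun p => 2 * |x p.2 - x p.1|).sum ≤ σ.displacement x

lemma hasCheapSwapDecomp_one : HasCheapSwapDecomp x 1 0 :=
  ⟨[], by simp, rfl, rfl, by simp⟩

variable {x}

lemma HasCheapSwapDecomp.inv {σ : Perm α} {m : ℕ} (h : HasCheapSwapDecomp x σ m) :
    HasCheapSwapDecomp x σ⁻¹ m := by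
  obtain ⟨l, hne, hlen, hprod, hcost⟩ := h
  refine ⟨l.reverse, by simpa using hne, by simpa using hlen, ?_, ?_⟩
  · simp [← hprod, List.prod_inv_reverse, List.map_reverse, Function.comp_def, swap_inv]
  · simpa [displacement_inv, List.map_reverse] using hcost

lemma HasCheapSwapDecomp.mul_of_disjoint {σ τ : Perm α} {m k : ℕ} (hστ : σ.Disjoint τ)
    (hσ : HasCheapSwapDecomp x σ m) (hτ : HasCheapSwapDecomp x τ k) :
    HasCheapSwapDecomp x (σ * τ) (m + k) := by
  obtain ⟨l₁, hne₁, rfl, rfl, hcost₁⟩ := hσ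
  obtain ⟨l₂, hne₂, rfl, rfl, hcost₂⟩ := hτ
  refine ⟨l₁ ++ l₂, ?_, List.length_append, by simp, ?_⟩
  · exact fun p hp => (List.mem_append.1 hp).elim (hne₁ p) (hne₂ p)
  · rw [displacement_mul_of_disjoint x hστ, List.map_append, List.sum_append]
    exact add_le_add hcost₁ hcost₂

lemma HasCheapSwapDecomp.of_swap_mul {σ : Perm α} {a b : α} {m : ℕ} (hab : a ≠ b)
    (h : HasCheapSwapDecomp x (swap a b * σ) m)
    (hcost : (swap a b * σ).displacement x + 2 * |x b - x a| ≤ σ.displacement x) :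
    HasCheapSwapDecomp x σ (m + 1) := by
  obtain ⟨l, hne, rfl, hprod, hl⟩ := h
  refine ⟨(a, b) :: l, ?_, rfl, ?_, ?_⟩
  · exact List.forall_mem_cons.2 ⟨hab, hne⟩
  · rw [List.map_cons, List.prod_cons, hprod, ← mul_assoc, swap_mul_self, one_mul]
  · simp only [List.map_cons, List.sum_cons]
    linarith

lemma IsCycle.swap_mul_eq_one_or {σ : Perm α} (hσ : σ.IsCycle) {a : α} (ha : σ a ≠ a) :
    (swap a (σ a) * σ = 1 ∧ #σ.support = 2) ∨
      ((swap a (σ a) * σ).IsCycle ∧ #(swap a (σ a) * σ).support + 1 = #σ.support) := by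
  by_cases h : σ (σ a) = a
  · have hswap := hσ.eq_swap_of_apply_apply_eq_self ha h
    refine .inl ⟨(congrArg (swap a (σ a) * ·) hswap).trans (swap_mul_self _ _), ?_⟩
    rw [hswap]
    exact card_support_swap ha.symm
  · refine .inr ⟨hσ.swap_mul ha h, ?_⟩
    rw [support_swap_mul_eq σ a h, sdiff_singleton_eq_erase]
    exact card_erase_add_one (mem_support.2 ha)

variable (x)

theorem IsCycle.hasCheapSwapDecomp {σ : Perm α} (hσ : σ.IsCycle) :
    HasCheapSwapDecomp x σ (#σ.support - 1) := by
  induction hk : #σ.support using Nat.strong_induction_on generalizing σ with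
  | _ k ih =>
  obtain ⟨a, ha, hmax⟩ := σ.support.exists_max_image x hσ.nonempty_support
  wlog hle : x (σ⁻¹ a) ≤ x (σ a) generalizing σ
  · have := this hσ.inv (by rwa [support_inv]) (by rwa [support_inv]) (by rwa [support_inv])
      (by simpa using le_of_not_ge hle)
    simpa using this.inv
  have ha' : σ a ≠ a := mem_support.1 ha
  have hpeel := displacement_swap_mul_add x hle (hmax _ (apply_mem_support.2 ha))
  have hpeeled : HasCheapSwapDecomp x (swap a (σ a) * σ) (k - 2) := by
    rcases hσ.swap_mul_eq_one_or ha' with ⟨h1, hcard⟩ | ⟨hcyc, hcard⟩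
    · rw [h1]
      convert hasCheapSwapDecomp_one x using 1
      omega
    · convert ih _ (by omega) hcyc rfl using 1
      omega
  convert hpeeled.of_swap_mul (Ne.symm ha') hpeel.le using 1
  have := hσ.two_le_card_support
  omega

theorem exists_hasCheapSwapDecomp (σ : Perm α) :
    ∃ m, m + #σ.cycleFactorsFinset = #σ.support ∧ HasCheapSwapDecomp x σ m := by
  induction σ using cycle_induction_on with
  | base_one => exact ⟨0, by simp, hasCheapSwapDecomp_one x⟩
  | base_cycles σ hσ =>
    refine ⟨_, ?_, hσ.hasCheapSwapDecomp x⟩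
    rw [hσ.cycleFactorsFinset_eq_singleton, card_singleton]
    have := hσ.two_le_card_support
    omega
  | induction_disjoint σ τ hστ hσ _ ihτ =>
    obtain ⟨m, hm, hτ⟩ := ihτ
    refine ⟨_, ?_, (hσ.hasCheapSwapDecomp x).mul_of_disjoint hστ hτ⟩
    rw [hστ.cycleFactorsFinset_mul_eq_union,
      card_union_of_disjoint hστ.disjoint_cycleFactorsFinset, hστ.card_support_mul,
      hσ.cycleFactorsFinset_eq_singleton, card_singleton]
    have := hσ.two_le_card_support
    omega

end Equiv.Perm

open Fin.NatCast

def pathPos (w : ℕ → ℝ) (i : Fin n) : ℝ := ∑ t ∈ range i, w t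

def adjSwap [NeZero n] (t : ℕ) : Perm (Fin n) := swap (t : Fin n) ((t + 1 : ℕ) : Fin n)

/-- The list in `Me` is first cast to `List (Fin n)`, so its factors are
`swap (t % n) ((t % n + 1) % n)`; they are the adjacent transpositions when `t + 1 < n`. -/
lemma map_swap_natCast_eq_map_adjSwap [NeZero n] {l : List ℕ} (hl : ∀ t ∈ l, t + 1 < n) :
    (l.map fun t => swap (t : Fin n) ((t + 1 : ℕ) : Fin n)) = l.map adjSwap := by
  induction l with
  | nil => rfl
  | cons t l ih =>
    rw [List.forall_mem_cons] at hl
    simp only [List.pure_def, List.bind_eq_flatMap, List.flatMap_cons, List.singleton_append,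
      List.map_cons] at ih ⊢
    rw [ih hl.2, adjSwap, Fin.val_cast_of_lt (Nat.lt_of_succ_lt hl.1)]

lemma Lcost_le_sum (ψ : Fin n → Fin n → ℝ) {π : Perm (Fin n)} {l : List (Fin n × Fin n)}
    (hne : ∀ p ∈ l, p.1 ≠ p.2) (hprod : (l.map fun p => swap p.1 p.2).prod = π) :
    Lcost ψ l.length π ≤ (l.map fun p => ψ p.1 p.2).sum := by
  refine csInf_le (Set.Finite.bddBelow ?_) ⟨l, hne, rfl, hprod, rfl⟩
  refine ((List.finite_length_eq _ l.length).image
    fun l : List (Fin n × Fin n) => (l.map fun p => ψ p.1 p.2).sum).subset ?_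
  rintro _ ⟨l', -, hl', -, rfl⟩
  exact ⟨l', hl', rfl⟩

lemma exists_adjacent_decomp [NeZero n] (π : Perm (Fin n)) :
    ∃ l : List ℕ, (∀ t ∈ l, t + 1 < n) ∧ (l.map adjSwap).prod = π := by
  obtain ⟨m, rfl⟩ := Nat.exists_eq_succ_of_ne_zero (NeZero.ne n)
  have hπ : π ∈ Submonoid.closure (Set.range fun i : Fin m => swap i.castSucc i.succ) := by
    rw [Perm.mclosure_swap_castSucc_succ]
    trivial
  induction hπ using Submonoid.closure_induction with
  | mem _ h =>
    obtain ⟨i, rfl⟩ := h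
    refine ⟨[i], by simp, ?_⟩
    simp [adjSwap]
  | one => exact ⟨[], by simp, rfl⟩
  | mul _ _ _ _ h₁ h₂ =>
    obtain ⟨l₁, hl₁, rfl⟩ := h₁
    obtain ⟨l₂, hl₂, rfl⟩ := h₂
    exact ⟨l₁ ++ l₂, fun t ht => (List.mem_append.1 ht).elim (hl₁ t) (hl₂ t), by simp⟩

section

variable (w : ℕ → ℝ) (hw : ∀ t, t + 1 < n → 0 ≤ w t)
include hw

lemma sum_Ico_min_max_eq_abs_pathPos_sub (i j : Fin n) :
    ∑ t ∈ Ico (min (i : ℕ) j) (max (i : ℕ) j), w t = |pathPos w j - pathPos w i| := by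
  wlog hij : i ≤ j generalizing i j
  · rw [min_comm, max_comm, abs_sub_comm]
    exact this j i (le_of_not_ge hij)
  rw [min_eq_left (Fin.le_def.1 hij), max_eq_right (Fin.le_def.1 hij), pathPos, pathPos,
    ← sum_Ico_eq_sub _ hij, abs_of_nonneg]
  have := j.isLt
  exact sum_nonneg fun t ht => hw t (by simp only [mem_Ico] at ht; omega)

lemma phiStar_le_two_mul_abs_pathPos_sub (i j : Fin n) :
    phiStar w i j ≤ 2 * |pathPos w j - pathPos w i| := by
  unfold phiStar
  split_ifs with hij
  · positivity
  rw [sum_Ico_min_max_eq_abs_pathPos_sub w hw]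
  have := i.isLt
  have := j.isLt
  have hlt : min (i : ℕ) j < max (i : ℕ) j := by
    have := Fin.val_ne_of_ne hij
    omega
  have : 0 ≤ sSup (w '' Set.Ico (min (i : ℕ) j) (max (i : ℕ) j)) :=
    le_csSup_of_le ((Set.finite_Ico _ _).image w).bddAbove ⟨_, ⟨le_rfl, hlt⟩, rfl⟩
      (hw _ (by omega))
  linarith

lemma displacement_pathPos_adjSwap [NeZero n] {t : ℕ} (ht : t + 1 < n) :
    (adjSwap t : Perm (Fin n)).displacement (pathPos w) = 2 * w t := by
  rw [adjSwap, Perm.displacement_swap, pathPos, pathPos, Fin.val_cast_of_lt ht,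
    Fin.val_cast_of_lt (by omega), sum_range_succ, add_sub_cancel_left, abs_of_nonneg (hw t ht)]

lemma displacement_pathPos_prod_adjSwap_le [NeZero n] (l : List ℕ) (hl : ∀ t ∈ l, t + 1 < n) :
    (l.map (adjSwap (n := n))).prod.displacement (pathPos w) ≤ 2 * (l.map w).sum := by
  induction l with
  | nil => simp
  | cons t l ih =>
    rw [List.forall_mem_cons] at hl
    simp only [List.map_cons, List.prod_cons, List.sum_cons]
    have := Perm.displacement_mul_le (pathPos w) (adjSwap t : Perm (Fin n)) (l.map adjSwap).prod
    rw [displacement_pathPos_adjSwap w hw hl.1] at this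
    linarith [ih hl.2]

lemma displacement_pathPos_le_two_mul_Me [NeZero n] (π : Perm (Fin n)) :
    π.displacement (pathPos w) ≤ 2 * Me w π := by
  suffices π.displacement (pathPos w) / 2 ≤ Me w π by linarith
  obtain ⟨l, hl, hprod⟩ := exists_adjacent_decomp π
  refine le_csInf ⟨_, l, hl, by rwa [map_swap_natCast_eq_map_adjSwap hl], rfl⟩ ?_
  rintro _ ⟨l, hl, rfl, rfl⟩
  rw [map_swap_natCast_eq_map_adjSwap hl]
  linarith [displacement_pathPos_prod_adjSwap_le w hw l hl]

end

/-- with `L(π)` the minimum `φ*`-cost over decompositions of `π` with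
exactly `n − c(π)` transpositions, one has `L(π) ≤ 2 M_e(π)`. -/
theorem stmt17 [NeZero n] (w : ℕ → ℝ) (hw : ∀ t, t + 1 < n → 0 ≤ w t)
    (π : Equiv.Perm (Fin n)) :
    Lcost (phiStar w) (n - cNum π) π ≤ 2 * Me w π := by
  obtain ⟨_, hm, l, hne, rfl, hprod, hcost⟩ := π.exists_hasCheapSwapDecomp (pathPos w)
  have hlen : n - cNum π = l.length := by
    have := card_le_univ π.support
    rw [Fintype.card_fin] at this
    rw [cNum]
    omega
  rw [hlen]
  calc Lcost (phiStar w) l.length π ≤ (l.map fun p => phiStar w p.1 p.2).sum :=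
        Lcost_le_sum _ hne hprod
    _ ≤ (l.map fun p => 2 * |pathPos w p.2 - pathPos w p.1|).sum :=
        List.sum_le_sum fun p _ => phiStar_le_two_mul_abs_pathPos_sub w hw p.1 p.2
    _ ≤ π.displacement (pathPos w) := hcost
    _ ≤ 2 * Me w π := displacement_pathPos_le_two_mul_Me w hw π
end

section
/- Let ψ be a nonnegative function on ordered pairs of distinct elements of {1,…,n} that is consistent with the cost function φ, i.e., ψ(a,b) + ψ(b,a) = φ(a,b) for all a ≠ b. Then for every cycle σ ∈ S_n there exists an h-decomposition of σ whose ψ-cost is at most M_φ(σ). -/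
/-!
Applying a transposition `(a b)` to a permutation `Q` (that is, passing from `Q` to `(a b) ∘ Q`)
is realised by two h-transpositions: first send `Q⁻¹ a` to `b`, then `Q⁻¹ b` to `a`. Their
`ψ`-cost is `ψ(a,b) + ψ(b,a) = φ(a,b)`, so every transposition decomposition of `σ` turns into
an h-decomposition of `σ` with the same cost. It remains to see that `M_φ(σ)` is attained: the
costs are sums of elements of the finite set of nonnegative values of `φ`, and the additive
monoid generated by such a set is well-founded.
-/

variable {n : ℕ}

/-- Applying a list of h-transpositions `(c, a, b)` (each sending the current
predecessor of `a`, namely `c`, to `b`) in order to a function `f`. -/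
def applyH (l : List (Fin n × Fin n × Fin n)) (f : Fin n → Fin n) : Fin n → Fin n :=
  l.foldl (fun g h => Function.update g h.1 h.2.2) f

open Equiv

section SwapProd

variable {α : Type*} [DecidableEq α]

def swapProd (l : List (α × α)) : Perm α :=
  (l.map fun p => swap p.1 p.2).prod

theorem exists_swapProd_eq [Finite α] (σ : Perm α) :
    ∃ l : List (α × α), (∀ p ∈ l, p.1 ≠ p.2) ∧ swapProd l = σ := by
  induction σ using Perm.swap_induction_on with
  | one => exact ⟨[], by simp, rfl⟩
  | swap_mul f x y hxy ih =>
    obtain ⟨l, hl, rfl⟩ := ih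
    exact ⟨(x, y) :: l, List.forall_mem_cons.2 ⟨hxy, hl⟩, rfl⟩

theorem update_update_inv_eq_swap_mul (Q : Perm α) (a b : α) :
    Function.update (Function.update ⇑Q (Q⁻¹ a) b) (Q⁻¹ b) a = ⇑(swap a b * Q) := by
  ext x
  simp only [Function.update_apply, Perm.mul_apply, swap_apply_def, Perm.eq_inv_iff_eq]
  split_ifs <;> simp_all

end SwapProd

theorem exists_swapProd_eq_cost_eq_Mcost {φ : Fin n → Fin n → ℝ}
    (hφnn : ∀ a b : Fin n, a ≠ b → 0 ≤ φ a b) (σ : Perm (Fin n)) :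
    ∃ l : List (Fin n × Fin n), (∀ p ∈ l, p.1 ≠ p.2) ∧ swapProd l = σ ∧
      (l.map fun p => φ p.1 p.2).sum = Mcost φ σ := by
  set T := (fun p : Fin n × Fin n => φ p.1 p.2) '' {p | p.1 ≠ p.2}
  have hT : (AddSubmonoid.closure T : Set ℝ).IsWF :=
    ((Set.toFinite T).isPWO.addSubmonoid_closure
      (by rintro _ ⟨p, hp, rfl⟩; exact hφnn _ _ hp)).isWF
  set S := {c : ℝ | ∃ l : List (Fin n × Fin n), (∀ p ∈ l, p.1 ≠ p.2) ∧
    swapProd l = σ ∧ (l.map fun p => φ p.1 p.2).sum = c}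
  have hST : S ⊆ AddSubmonoid.closure T := by
    rintro _ ⟨l, hl, -, rfl⟩
    refine AddSubmonoid.list_sum_mem _ fun x hx => ?_
    obtain ⟨p, hp, rfl⟩ := List.mem_map.1 hx
    exact AddSubmonoid.subset_closure ⟨p, hl p hp, rfl⟩
  have hS : S.Nonempty := by
    obtain ⟨l, hl, hprod⟩ := exists_swapProd_eq σ
    exact ⟨_, l, hl, hprod, rfl⟩
  have hSwf := hT.subset hST
  have hmin : IsLeast S (Set.IsWF.min hSwf hS) :=
    ⟨Set.IsWF.min_mem hSwf hS, fun c hc => Set.IsWF.min_le hSwf hS hc⟩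
  obtain ⟨l, hl, hprod, hcost⟩ := hmin.1
  exact ⟨l, hl, hprod, hcost.trans hmin.csInf_eq.symm⟩

theorem applyH_append (L₁ L₂ : List (Fin n × Fin n × Fin n)) (f : Fin n → Fin n) :
    applyH (L₁ ++ L₂) f = applyH L₂ (applyH L₁ f) :=
  List.foldl_append

def HApplicable : List (Fin n × Fin n × Fin n) → (Fin n → Fin n) → Prop
  | [], _ => True
  | h :: t, f => f h.1 = h.2.1 ∧ HApplicable t (Function.update f h.1 h.2.2)

theorem HApplicable.append {L₁ L₂ : List (Fin n × Fin n × Fin n)} {f : Fin n → Fin n}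
    (h₁ : HApplicable L₁ f) (h₂ : HApplicable L₂ (applyH L₁ f)) : HApplicable (L₁ ++ L₂) f := by
  induction L₁ generalizing f with
  | nil => exact h₂
  | cons h t ih => exact ⟨h₁.1, ih h₁.2 h₂⟩

theorem HApplicable.applyH_take_get {L : List (Fin n × Fin n × Fin n)} {f : Fin n → Fin n}
    (hL : HApplicable L f) (i : ℕ) (hi : i < L.length) :
    applyH (L.take i) f (L.get ⟨i, hi⟩).1 = (L.get ⟨i, hi⟩).2.1 := by
  induction L generalizing f i with
  | nil => simp at hi
  | cons h t ih =>
    cases i with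
    | zero => exact hL.1
    | succ i => exact ih hL.2 i (Nat.lt_of_succ_lt_succ hi)

def swapSteps (Q : Perm (Fin n)) (a b : Fin n) : List (Fin n × Fin n × Fin n) :=
  [(Q⁻¹ a, a, b), (Q⁻¹ b, b, a)]

theorem applyH_swapSteps (Q : Perm (Fin n)) (a b : Fin n) :
    applyH (swapSteps Q a b) Q = ⇑(swap a b * Q) :=
  update_update_inv_eq_swap_mul Q a b

theorem hApplicable_swapSteps (Q : Perm (Fin n)) (a b : Fin n) :
    HApplicable (swapSteps Q a b) Q := by
  refine ⟨by simp, ?_, trivial⟩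
  simp only [Function.update_apply]
  split_ifs with h <;> simp_all

-- The head of `l` is the transposition applied last, so its two steps come at the end.
def hDecomp : List (Fin n × Fin n) → List (Fin n × Fin n × Fin n)
  | [] => []
  | p :: t => hDecomp t ++ swapSteps (swapProd t) p.1 p.2

theorem applyH_hDecomp (l : List (Fin n × Fin n)) : applyH (hDecomp l) id = ⇑(swapProd l) := by
  induction l with
  | nil => rfl
  | cons p t ih => rw [hDecomp, applyH_append, ih, applyH_swapSteps]; rfl

theorem hApplicable_hDecomp (l : List (Fin n × Fin n)) : HApplicable (hDecomp l) id := by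
  induction l with
  | nil => trivial
  | cons p t ih =>
    refine ih.append ?_
    rw [applyH_hDecomp]
    exact hApplicable_swapSteps _ _ _

theorem ne_of_mem_hDecomp {l : List (Fin n × Fin n)} (hl : ∀ p ∈ l, p.1 ≠ p.2) :
    ∀ h ∈ hDecomp l, h.2.1 ≠ h.2.2 := by
  induction l with
  | nil => simp [hDecomp]
  | cons p t ih =>
    simp only [List.forall_mem_cons] at hl
    simp only [hDecomp, swapSteps, List.mem_append, List.mem_cons, List.not_mem_nil]
    rintro h (hh | rfl | rfl | hh)
    exacts [ih hl.2 h hh, hl.1, hl.1.symm, hh.elim]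

theorem sum_hDecomp_cost {φ ψ : Fin n → Fin n → ℝ}
    (hcons : ∀ a b : Fin n, a ≠ b → ψ a b + ψ b a = φ a b)
    {l : List (Fin n × Fin n)} (hl : ∀ p ∈ l, p.1 ≠ p.2) :
    ((hDecomp l).map fun h => ψ h.2.1 h.2.2).sum = (l.map fun p => φ p.1 p.2).sum := by
  induction l with
  | nil => rfl
  | cons p t ih =>
    simp only [List.forall_mem_cons] at hl
    simp only [hDecomp, swapSteps, List.map_append, List.sum_append, ih hl.2, List.map_cons,
      List.map_nil, List.sum_cons, List.sum_nil, ← hcons p.1 p.2 hl.1]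
    ring

theorem stmt19_general (φ ψ : Fin n → Fin n → ℝ)
    (hφnn : ∀ a b : Fin n, a ≠ b → 0 ≤ φ a b)
    (hcons : ∀ a b : Fin n, a ≠ b → ψ a b + ψ b a = φ a b)
    (σ : Equiv.Perm (Fin n)) :
    ∃ l : List (Fin n × Fin n × Fin n),
      (∀ h ∈ l, h.2.1 ≠ h.2.2) ∧
      (∀ i : ℕ, ∀ hi : i < l.length,
        applyH (l.take i) id (l.get ⟨i, hi⟩).1 = (l.get ⟨i, hi⟩).2.1) ∧
      applyH l id = ⇑σ ∧
      (l.map fun h => ψ h.2.1 h.2.2).sum ≤ Mcost φ σ := by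
  obtain ⟨l, hl, hprod, hcost⟩ := exists_swapProd_eq_cost_eq_Mcost hφnn σ
  refine ⟨hDecomp l, ne_of_mem_hDecomp hl, (hApplicable_hDecomp l).applyH_take_get,
    by rw [applyH_hDecomp, hprod], ?_⟩
  rw [sum_hDecomp_cost hcons hl, hcost]

/-- if `ψ` is nonnegative and consistent with `φ`
(`ψ a b + ψ b a = φ a b` for `a ≠ b`), then for every cycle `σ` there is an
h-decomposition of `σ` (a list of h-transpositions, each applicable at its step,
transforming the identity function into `σ`) whose `ψ`-cost is at most `M_φ(σ)`. -/
theorem stmt19 (φ ψ : Fin n → Fin n → ℝ)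
    (hφnn : ∀ a b : Fin n, a ≠ b → 0 ≤ φ a b)
    (hφsym : ∀ a b : Fin n, φ a b = φ b a)
    (hψnn : ∀ a b : Fin n, a ≠ b → 0 ≤ ψ a b)
    (hcons : ∀ a b : Fin n, a ≠ b → ψ a b + ψ b a = φ a b)
    (σ : Equiv.Perm (Fin n)) (hσ : σ.IsCycle) :
    ∃ l : List (Fin n × Fin n × Fin n),
      (∀ h ∈ l, h.2.1 ≠ h.2.2) ∧
      (∀ i : ℕ, ∀ hi : i < l.length,
        applyH (l.take i) id (l.get ⟨i, hi⟩).1 = (l.get ⟨i, hi⟩).2.1) ∧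
      applyH l id = ⇑σ ∧
      (l.map fun h => ψ h.2.1 h.2.2).sum ≤ Mcost φ σ :=
  stmt19_general φ ψ hφnn hcons σ
end
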